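/- For every k ≥ 0, the local trace space M^t(F) := P_k(F)² + ∇ P̃_{k+2}(F) is contained in [P_{k+1}(F)]², and its dimension equals dim [P_k(F)]² + (k+3), i.e. the sum P_k(F)² + ∇ P̃_{k+2}(F) is direct. -/

import Mathlib

open MvPolynomial

/-!
The partial derivatives of a homogeneous polynomial `q` of degree `k + 2` are homogeneous of
degree `k + 1`. Hence `∇q` lies in `[P_{k+1}]²`, and it lies in `[P_k]²` only when it vanishes.
By Euler's identity `∑ xᵢ ∂ᵢq = (k + 2) q` the gradient is injective on `P̃_{k+2}`, a space with
one basis vector per monomial of degree `k + 2` in two variables, i.e. of dimension `k + 3`.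
The dimension formula is then Grassmann's formula for the direct sum.
-/

noncomputable def grad2 : MvPolynomial (Fin 2) ℝ →ₗ[ℝ] (Fin 2 → MvPolynomial (Fin 2) ℝ) :=
  LinearMap.pi fun i => (pderiv (R := ℝ) i).toLinearMap

/-- `[P_k(F)]²`: vector polynomials in two variables with components of total degree ≤ k. -/
noncomputable def vecPk2 (k : ℕ) : Submodule ℝ (Fin 2 → MvPolynomial (Fin 2) ℝ) :=
  Submodule.pi Set.univ fun _ => restrictTotalDegree (Fin 2) ℝ k

/-- `∇ P̃_{k+2}(F)`: gradients of homogeneous polynomials of degree `k+2` in two variables. -/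
noncomputable def gradHom2 (k : ℕ) : Submodule ℝ (Fin 2 → MvPolynomial (Fin 2) ℝ) :=
  Submodule.map grad2 (homogeneousSubmodule (Fin 2) ℝ (k + 2))

namespace MvPolynomial

variable {σ R : Type*} [CommRing R]

theorem finrank_homogeneousSubmodule [Fintype σ] [DecidableEq σ] [Nontrivial R] (n : ℕ) :
    Module.finrank R (homogeneousSubmodule σ R n) = (Fintype.card σ + n - 1).choose n := by
  have hmonomials :
      {d : σ →₀ ℕ | d.degree = n} = ↑((Finset.univ : Finset σ).finsuppAntidiag n) := by
    ext d
    simp [Finsupp.degree_eq_sum]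
  rw [homogeneousSubmodule_eq_finsupp_supported, hmonomials,
    (AddMonoidAlgebra.supportedEquivFinsupp _).finrank_eq, Module.finrank_finsupp_self]
  simp only [SetLike.coe_sort_coe, Fintype.card_coe, Finset.card_finsuppAntidiag_nat_eq_choose,
    Finset.card_univ]

instance finite_homogeneousSubmodule [Finite σ] (n : ℕ) :
    Module.Finite R (homogeneousSubmodule σ R n) :=
  Module.Finite.iff_fg.mpr (homogeneousSubmodule_fg σ R n)

theorem IsHomogeneous.eq_zero_of_totalDegree_lt {φ : MvPolynomial σ R} {n : ℕ}
    (hφ : φ.IsHomogeneous n) (h : φ.totalDegree < n) : φ = 0 := by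
  by_contra hne
  exact h.ne (hφ.totalDegree hne)

theorem IsHomogeneous.eq_zero_of_forall_pderiv_eq_zero [Fintype σ] [IsDomain R] [CharZero R]
    {φ : MvPolynomial σ R} {n : ℕ} (hφ : φ.IsHomogeneous n) (hn : n ≠ 0)
    (h : ∀ i, pderiv i φ = 0) : φ = 0 := by
  have euler := hφ.sum_X_mul_pderiv
  simp only [h, mul_zero, Finset.sum_const_zero] at euler
  exact (nsmul_eq_zero_iff_right hn).mp euler.symm

end MvPolynomial

theorem mem_vecPk2 {k : ℕ} {v : Fin 2 → MvPolynomial (Fin 2) ℝ} :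
    v ∈ vecPk2 k ↔ ∀ i, (v i).totalDegree ≤ k := by
  simp [vecPk2, mem_restrictTotalDegree]

theorem vecPk2_mono : Monotone vecPk2 :=
  fun _ _ hkl _ hv => mem_vecPk2.mpr fun i => (mem_vecPk2.mp hv i).trans hkl

theorem gradHom2_le_vecPk2_succ (k : ℕ) : gradHom2 k ≤ vecPk2 (k + 1) := by
  -- written `k + 1 + 1` so that the degree `k + 1 + 1 - 1` of `pderiv i q` reduces to `k + 1`
  rintro _ ⟨q, hq : q.IsHomogeneous (k + 1 + 1), rfl⟩
  exact mem_vecPk2.mpr fun i => hq.pderiv.totalDegree_le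

theorem vecPk2_inf_gradHom2_eq_bot (k : ℕ) : vecPk2 k ⊓ gradHom2 k = ⊥ := by
  refine (Submodule.eq_bot_iff _).mpr ?_
  rintro _ ⟨hlow, q, hq : q.IsHomogeneous (k + 1 + 1), rfl⟩
  funext i
  exact hq.pderiv.eq_zero_of_totalDegree_lt (Nat.lt_succ_of_le (mem_vecPk2.mp hlow i))

theorem gradHom2_eq_range (k : ℕ) :
    gradHom2 k =
      LinearMap.range (grad2 ∘ₗ (homogeneousSubmodule (Fin 2) ℝ (k + 2)).subtype) := by
  rw [LinearMap.range_comp, Submodule.range_subtype]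
  rfl

theorem injective_grad2_comp_homogeneous (k : ℕ) :
    Function.Injective (grad2 ∘ₗ (homogeneousSubmodule (Fin 2) ℝ (k + 2)).subtype) := by
  refine (injective_iff_map_eq_zero _).mpr fun q hq => Subtype.ext ?_
  exact q.2.eq_zero_of_forall_pderiv_eq_zero (Nat.succ_ne_zero _) (congrFun hq ·)

theorem finrank_gradHom2 (k : ℕ) : Module.finrank ℝ (gradHom2 k) = k + 3 := by
  rw [gradHom2_eq_range, LinearMap.finrank_range_of_inj (injective_grad2_comp_homogeneous k),
    finrank_homogeneousSubmodule, Fintype.card_fin,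
    show 2 + (k + 2) - 1 = k + 2 + 1 by omega, Nat.choose_succ_self_right]

instance (k : ℕ) : FiniteDimensional ℝ (vecPk2 k) := by
  rw [vecPk2, ← Submodule.range_subtype (restrictTotalDegree (Fin 2) ℝ k),
    ← LinearMap.range_compLeft]
  infer_instance

instance (k : ℕ) : FiniteDimensional ℝ (gradHom2 k) := by
  rw [gradHom2_eq_range]
  infer_instance

/-- The local trace space `M^t(F) = [P_k(F)]² + ∇P̃_{k+2}(F)` is contained in
`[P_{k+1}(F)]²`, the sum is direct, and its dimension is `dim [P_k(F)]² + (k+3)`. -/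
theorem trace_space_dimension (k : ℕ) :
    (vecPk2 k ⊔ gradHom2 k ≤ vecPk2 (k + 1)) ∧
    (vecPk2 k ⊓ gradHom2 k = ⊥) ∧
    Module.finrank ℝ ↥(vecPk2 k ⊔ gradHom2 k) =
      Module.finrank ℝ ↥(vecPk2 k) + (k + 3) := by
  refine ⟨sup_le (vecPk2_mono k.le_succ) (gradHom2_le_vecPk2_succ k),
    vecPk2_inf_gradHom2_eq_bot k, ?_⟩
  have := Submodule.finrank_sup_add_finrank_inf_eq (vecPk2 k) (gradHom2 k)
  rwa [vecPk2_inf_gradHom2_eq_bot, finrank_bot, add_zero, finrank_gradHom2] at this
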